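/- Fix k ∈ ℕ with k ≥ 1, and define for γ > 0 the function ρ_γ: ℂ → ℝ by ρ_γ(z) = (1 + γ r^{k−1}(k−r)² e^{−r}/k!) · exp(−γ r^k e^{−r}/k!) with r = π|z|². Then for every γ > 0, ∫_{B(0,√(k/π))} ρ_γ(z) dz = k; in particular this integral does not depend on γ. -/

import Mathlib

/-!
The intensity is radial, and under `r = π‖z‖²` the area element `dz` becomes `dr`, so the
integral over `B(0, √(k/π))` is `∫₀ᵏ ρ_γ dr` for the radial profile. That profile is the exact
derivative of `(r - k) · exp(-γ rᵏ e⁻ʳ / k!)`, because `d/dr (rᵏ e⁻ʳ) = (k - r) rᵏ⁻¹ e⁻ʳ`; the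
antiderivative vanishes at `r = k` and equals `-k` at `r = 0`, whatever `γ` is.
-/

open Real MeasureTheory

namespace Complex

variable {F : Type*} [NormedAddCommGroup F] [NormedSpace ℝ F]

theorem setIntegral_ball_fun_norm (f : ℝ → F) {R : ℝ} (hR : 0 ≤ R) :
    ∫ z in Metric.ball (0 : ℂ) R, f ‖z‖ = (2 * π) • ∫ y in (0 : ℝ)..R, y • f y := by
  have hball : (Metric.ball (0 : ℂ) R).indicator (fun z => f ‖z‖) =
      fun z => (Set.Iio R).indicator f ‖z‖ := by
    ext z
    simp only [Set.indicator, Metric.mem_ball, dist_zero_right, Set.mem_Iio]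
  have hvol : volume.real (Metric.ball (0 : ℂ) 1) = π := by
    simp [Measure.real, Complex.volume_ball]
  rw [← integral_indicator measurableSet_ball, hball, integral_fun_norm_addHaar volume,
    Complex.finrank_real_complex, hvol, intervalIntegral.integral_of_le hR,
    integral_Ioc_eq_integral_Ioo, ← Set.Ioi_inter_Iio, ← setIntegral_indicator measurableSet_Iio]
  simp only [Set.indicator_smul_apply]
  rw [mul_smul, ofNat_smul_eq_nsmul ℝ 2]
  norm_num

theorem setIntegral_ball_comp_pi_mul_norm_sq {g : ℝ → F} (hg : Continuous g) {R : ℝ}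
    (hR : 0 ≤ R) :
    ∫ z in Metric.ball (0 : ℂ) R, g (π * ‖z‖ ^ 2) = ∫ r in (0 : ℝ)..π * R ^ 2, g r := by
  have hderiv : ∀ y ∈ Set.uIcc 0 R, HasDerivAt (fun y : ℝ => π * y ^ 2) (2 * π * y) y :=
    fun y _ => ((hasDerivAt_pow 2 y).const_mul π).congr_deriv (by ring)
  have hsub := intervalIntegral.integral_deriv_smul_comp hderiv (by fun_prop) hg
  simp only [Function.comp_def, mul_zero, ne_eq, OfNat.ofNat_ne_zero, not_false_eq_true,
    zero_pow] at hsub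
  rw [setIntegral_ball_fun_norm (fun y => g (π * y ^ 2)) hR, ← hsub,
    ← intervalIntegral.integral_smul]
  simp only [mul_smul]

end Complex

theorem hasDerivAt_pow_mul_exp_neg {k : ℕ} (hk : 1 ≤ k) (r : ℝ) :
    HasDerivAt (fun r => r ^ k * exp (-r)) ((k - r) * r ^ (k - 1) * exp (-r)) r := by
  obtain ⟨n, rfl⟩ : ∃ n, k = n + 1 := ⟨k - 1, (Nat.sub_add_cancel hk).symm⟩
  refine ((hasDerivAt_pow (n + 1) r).mul (hasDerivAt_neg r).exp).congr_deriv ?_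
  simp only [Nat.add_sub_cancel]
  push_cast
  ring

/-- The intensity `ρ_γ` as a function of `r = π‖z‖²`. -/
noncomputable def hermiteZeroIntensity (k : ℕ) (γ r : ℝ) : ℝ :=
  (1 + γ * r ^ (k - 1) * ((k : ℝ) - r) ^ 2 * exp (-r) / k.factorial) *
    exp (-(γ * r ^ k * exp (-r) / k.factorial))

theorem continuous_hermiteZeroIntensity (k : ℕ) (γ : ℝ) :
    Continuous (hermiteZeroIntensity k γ) := by
  unfold hermiteZeroIntensity
  fun_prop

theorem hasDerivAt_sub_mul_exp_hermiteZeroIntensity {k : ℕ} (hk : 1 ≤ k) (γ r : ℝ) :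
    HasDerivAt (fun r => (r - k) * exp (-(γ * (r ^ k * exp (-r)) / k.factorial)))
      (hermiteZeroIntensity k γ r) r := by
  have hφ := (((hasDerivAt_pow_mul_exp_neg hk r).const_mul γ).div_const k.factorial).neg.exp
  refine (((hasDerivAt_id r).sub_const (k : ℝ)).mul hφ).congr_deriv ?_
  simp only [hermiteZeroIntensity, id, Pi.neg_apply, mul_assoc]
  ring

theorem integral_hermiteZeroIntensity {k : ℕ} (hk : 1 ≤ k) (γ : ℝ) :
    ∫ r in (0 : ℝ)..k, hermiteZeroIntensity k γ r = k := by
  rw [intervalIntegral.integral_eq_sub_of_hasDerivAt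
    (fun r _ => hasDerivAt_sub_mul_exp_hermiteZeroIntensity hk γ r)
    ((continuous_hermiteZeroIntensity k γ).intervalIntegrable _ _)]
  simp [Nat.one_le_iff_ne_zero.mp hk]

/-- For every signal-to-noise ratio `γ > 0`, the expected number of zeros of the
spectrogram of the noisy `k`-th Hermite function falling in the disc `B(0, √(k/π))`
equals `k`; in particular it does not depend on `γ`. Here the intensity is
`ρ_γ(z) = (1 + γ r^{k−1}(k−r)² e^{−r}/k!) exp(−γ r^k e^{−r}/k!)` with `r = π|z|²`. -/
theorem expected_zeros_ball_hermite_indep (k : ℕ) (hk : 1 ≤ k)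
    (ρ : ℝ → ℂ → ℝ)
    (hρ : ∀ γ : ℝ, ∀ z : ℂ, ρ γ z =
      (1 + γ * (π * ‖z‖ ^ 2) ^ (k - 1)
          * ((k : ℝ) - π * ‖z‖ ^ 2) ^ 2
          * Real.exp (-(π * ‖z‖ ^ 2)) / (Nat.factorial k))
        * Real.exp (-(γ * (π * ‖z‖ ^ 2) ^ k
          * Real.exp (-(π * ‖z‖ ^ 2)) / (Nat.factorial k)))) :
    ∀ γ : ℝ, 0 < γ →
      ∫ z in Metric.ball (0 : ℂ) (Real.sqrt (k / π)), ρ γ z = (k : ℝ) := by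
  intro γ _
  have hρ_radial : ρ γ = fun z => hermiteZeroIntensity k γ (π * ‖z‖ ^ 2) := funext (hρ γ)
  have hradius : π * Real.sqrt (k / π) ^ 2 = k := by
    rw [Real.sq_sqrt (by positivity)]
    field_simp
  rw [hρ_radial, Complex.setIntegral_ball_comp_pi_mul_norm_sq
    (continuous_hermiteZeroIntensity k γ) (Real.sqrt_nonneg _), hradius,
    integral_hermiteZeroIntensity hk γ]
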